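/- arXiv:1112.1859 — 2 statements merged into one kernel-verified Lean document; each statement's English description precedes it below -/
import Mathlib

section
/- Define the linearly-transformed particle (LTP) transport operator by T̄_{h,(1)} φ⁰_{h,k}(x) := φ⁰_{h,k}(B̄_{(1),k}(x)) = h^{−d} φ(h^{−1} J_k^{−1}(x − F̄(x⁰_k))), extended to f⁰_h by linearity. Then there exists a constant C depending only on c_w, L_φ, ρ⁰ and d (independent of h, f⁰ and the flow) such that ‖(T̄_{h,(1)} − T̄_ex) f⁰_h‖_{L^∞(ℝ^d)} ≤ C · h c_F · (1 + h c_F)^d · ‖f⁰‖_{L^∞}, where c_F := |F̄|₁² |B̄|₂. -/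
open scoped NNReal
open Set

/-- Grid node `x⁰_k := h k`. -/
noncomputable def node (d : ℕ) (h : ℝ) (k : Fin d → ℤ) : Fin d → ℝ :=
  fun i => h * (k i : ℝ)

/-- Particle shape function `φ⁰_{h,k}(x) := h^{-d} φ(h⁻¹ x - k)`. -/
noncomputable def part (d : ℕ) (h : ℝ) (φ : (Fin d → ℝ) → ℝ)
    (k : Fin d → ℤ) (x : Fin d → ℝ) : ℝ :=
  (h ^ d)⁻¹ * φ (fun i => x i / h - (k i : ℝ))

/-- Partial derivative `∂_l g`. -/
noncomputable def pd (d : ℕ) (l : Fin d) (g : (Fin d → ℝ) → ℝ) : (Fin d → ℝ) → ℝ :=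
  fun x => fderiv ℝ g x (Pi.single l 1)

/-- Linearized backward flow `B̄_{(1),k}(x) := x⁰_k + J_k⁻¹ (x − F̄(x⁰_k))`, where
`J_k⁻¹ = J_{B̄}(F̄(x⁰_k))` is the Jacobian of the inverse map at `F̄(x⁰_k)`. -/
noncomputable def B1 (d : ℕ) (h : ℝ) (F : (Fin d → ℝ) ≃ (Fin d → ℝ))
    (k : Fin d → ℤ) (x : Fin d → ℝ) : Fin d → ℝ :=
  node d h k +
    fderiv ℝ (F.symm : (Fin d → ℝ) → (Fin d → ℝ)) (F (node d h k)) (x - F (node d h k))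

/-! Only particles whose support contains `B̄_{(1),k} x` or `B̄ x` contribute at `x`. For those,
`‖x - F̄(x⁰_k)‖ ≤ |F̄|₁ h ρ⁰`: in the first case because `x - F̄(x⁰_k) = J_k (B̄_{(1),k} x - x⁰_k)`,
in the second by the mean value inequality. The second-order Taylor remainder of `B̄` at
`F̄(x⁰_k)` then gives `‖B̄ x - B̄_{(1),k} x‖ ≤ |B̄|₂ (|F̄|₁ h ρ⁰)² = h ρ⁰² (h c_F)`.
The Lipschitz bound on `φ` turns this into a bound `c_w L_φ ρ⁰² (h c_F) ‖f⁰‖_∞` per term, and the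
contributing `k` lie in the lattice box of radius `ρ⁰ + ρ⁰² (h c_F)` around `B̄ x / h`, which has at
most `(1 + 2ρ⁰ + 2ρ⁰²)^d (1 + h c_F)^d` points. -/

open Finset

lemma ContinuousLinearMap.opNorm_le_sum_norm_apply_single {ι E : Type*} [Fintype ι]
    [DecidableEq ι] [SeminormedAddCommGroup E] [NormedSpace ℝ E] (L : (ι → ℝ) →L[ℝ] E) :
    ‖L‖ ≤ ∑ l, ‖L (Pi.single l 1)‖ := by
  refine L.opNorm_le_bound (sum_nonneg fun _ _ => norm_nonneg _) fun v => ?_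
  calc ‖L v‖ = ‖∑ l, v l • L (Pi.single l 1)‖ := by
        conv_lhs => rw [pi_eq_sum_univ' v]
        simp only [map_sum, map_smul]
    _ ≤ ∑ l, ‖v‖ * ‖L (Pi.single l 1)‖ := by
        refine (norm_sum_le _ _).trans (sum_le_sum fun l _ => ?_)
        rw [norm_smul]
        gcongr
        exact norm_le_pi_norm v l
    _ = (∑ l, ‖L (Pi.single l 1)‖) * ‖v‖ := by rw [← mul_sum, mul_comm]

lemma norm_fderiv_le_of_sum_abs_pd_le {d : ℕ} {G : (Fin d → ℝ) → (Fin d → ℝ)} {c : ℝ}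
    (hc : 0 ≤ c) (hG : Differentiable ℝ G) (hb : ∀ i x, ∑ l, |pd d l (fun y => G y i) x| ≤ c)
    (x : Fin d → ℝ) : ‖fderiv ℝ G x‖ ≤ c := by
  rw [fderiv_pi (φ := fun i y => G y i) fun i =>
    (differentiable_apply i).comp hG |>.differentiableAt]
  refine ContinuousLinearMap.norm_pi_le_of_le (fun i => ?_) hc
  exact (ContinuousLinearMap.opNorm_le_sum_norm_apply_single _).trans (hb i x)

lemma pd_pd_eq_fderiv_fderiv {d : ℕ} {g : (Fin d → ℝ) → ℝ} (hg : ContDiff ℝ 2 g)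
    (l₁ l₂ : Fin d) (x : Fin d → ℝ) :
    pd d l₁ (pd d l₂ g) x = fderiv ℝ (fderiv ℝ g) x (Pi.single l₁ 1) (Pi.single l₂ 1) := by
  have hg' : Differentiable ℝ (fderiv ℝ g) :=
    (hg.fderiv_right (m := 1) (by norm_num)).differentiable one_ne_zero
  change fderiv ℝ (fun y => fderiv ℝ g y (Pi.single l₂ 1)) x _ = _
  simp [fderiv_clm_apply (hg' x) (differentiableAt_const _)]

lemma norm_fderiv_fderiv_le_sum_abs_pd_pd {d : ℕ} {g : (Fin d → ℝ) → ℝ} (hg : ContDiff ℝ 2 g)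
    (x : Fin d → ℝ) :
    ‖fderiv ℝ (fderiv ℝ g) x‖ ≤ ∑ l₁, ∑ l₂, |pd d l₁ (pd d l₂ g) x| := by
  refine (ContinuousLinearMap.opNorm_le_sum_norm_apply_single _).trans
    (sum_le_sum fun l₁ _ => ?_)
  refine (ContinuousLinearMap.opNorm_le_sum_norm_apply_single _).trans_eq
    (sum_congr rfl fun l₂ _ => ?_)
  rw [pd_pd_eq_fderiv_fderiv hg, Real.norm_eq_abs]

lemma norm_sub_sub_fderiv_le_of_norm_fderiv_fderiv_le {E G : Type*} [NormedAddCommGroup E]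
    [NormedSpace ℝ E] [NormedAddCommGroup G] [NormedSpace ℝ G] {g : E → G} {c : ℝ}
    (hg : ContDiff ℝ 2 g) (hb : ∀ z, ‖fderiv ℝ (fderiv ℝ g) z‖ ≤ c) (x y : E) :
    ‖g y - g x - fderiv ℝ g x (y - x)‖ ≤ c * ‖y - x‖ ^ 2 := by
  have hg' : Differentiable ℝ (fderiv ℝ g) :=
    (hg.fderiv_right (m := 1) (by norm_num)).differentiable one_ne_zero
  have hc : 0 ≤ c := (norm_nonneg (fderiv ℝ (fderiv ℝ g) x)).trans (hb x)
  have hlip : ∀ z, ‖fderiv ℝ g z - fderiv ℝ g x‖ ≤ c * ‖z - x‖ := fun z =>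
    convex_univ.norm_image_sub_le_of_norm_fderiv_le (fun z _ => hg' z) (fun z _ => hb z)
      (mem_univ x) (mem_univ z)
  have := (convex_closedBall x ‖y - x‖).norm_image_sub_le_of_norm_fderiv_le'
    (fun z _ => (hg.differentiable two_ne_zero) z)
    (fun z hz => (hlip z).trans (mul_le_mul_of_nonneg_left (mem_closedBall_iff_norm.1 hz) hc))
    (Metric.mem_closedBall_self (norm_nonneg _)) (mem_closedBall_iff_norm.2 le_rfl)
  rwa [mul_assoc, ← sq] at this

lemma fderiv_apply_fderiv_symm_apply {E E' : Type*} [NormedAddCommGroup E] [NormedSpace ℝ E]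
    [NormedAddCommGroup E'] [NormedSpace ℝ E'] {F : E ≃ E'} (hF : Differentiable ℝ F)
    (hFs : Differentiable ℝ F.symm) (y v : E') :
    fderiv ℝ F (F.symm y) (fderiv ℝ F.symm y v) = v := by
  have hcomp := (hF (F.symm y)).hasFDerivAt.comp y (hFs y).hasFDerivAt
  rw [F.self_comp_symm] at hcomp
  exact DFunLike.congr_fun (hcomp.unique (hasFDerivAt_id y)) v

lemma norm_sub_node_le_of_part_ne_zero {d : ℕ} {h ρ0 : ℝ} {φ : (Fin d → ℝ) → ℝ}
    (hh : 0 < h) (hsupp : ∀ y, φ y ≠ 0 → ‖y‖ ≤ ρ0) {k : Fin d → ℤ} {u : Fin d → ℝ}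
    (hu : part d h φ k u ≠ 0) : ‖u - node d h k‖ ≤ h * ρ0 := by
  have hsub : u - node d h k = h • fun i => u i / h - k i := by
    ext i
    simp only [Pi.sub_apply, node, Pi.smul_apply, smul_eq_mul]
    field_simp
  rw [hsub, norm_smul, Real.norm_of_nonneg hh.le]
  exact mul_le_mul_of_nonneg_left (hsupp _ (right_ne_zero_of_mul hu)) hh.le

lemma abs_part_sub_part_le {d : ℕ} {h : ℝ} {Lφ : ℝ≥0} {φ : (Fin d → ℝ) → ℝ} (hh : 0 < h)
    (hφ : LipschitzWith Lφ φ) (k : Fin d → ℤ) (u v : Fin d → ℝ) :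
    |part d h φ k u - part d h φ k v| ≤ Lφ * ‖u - v‖ / h ^ (d + 1) := by
  have hsub : (fun i => u i / h - k i) - (fun i => v i / h - k i) = h⁻¹ • (u - v) := by
    ext i
    simp only [Pi.sub_apply, sub_sub_sub_cancel_right, Pi.smul_apply, smul_eq_mul]
    ring
  have hlip := hφ.dist_le_mul (fun i => u i / h - k i) (fun i => v i / h - k i)
  rw [dist_eq_norm, dist_eq_norm, hsub, norm_smul, norm_inv, Real.norm_of_nonneg hh.le] at hlip
  rw [part, part, ← mul_sub, abs_mul, abs_inv, abs_of_pos (by positivity), ← Real.norm_eq_abs]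
  calc (h ^ d)⁻¹ * ‖φ _ - φ _‖ ≤ (h ^ d)⁻¹ * (Lφ * (h⁻¹ * ‖u - v‖)) := by gcongr
    _ = Lφ * ‖u - v‖ / h ^ (d + 1) := by field_simp; ring

noncomputable def intBox {ι : Type*} [Fintype ι] [DecidableEq ι] (y : ι → ℝ) (R : ℝ) :
    Finset (ι → ℤ) :=
  Fintype.piFinset fun i => Finset.Icc ⌈y i - R⌉ ⌊y i + R⌋

lemma mem_intBox {ι : Type*} [Fintype ι] [DecidableEq ι] {y : ι → ℝ} {R : ℝ} {k : ι → ℤ} :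
    k ∈ intBox y R ↔ ∀ i, |y i - k i| ≤ R := by
  simp only [intBox, Fintype.mem_piFinset, Finset.mem_Icc, Int.ceil_le, Int.le_floor, abs_le]
  refine forall_congr' fun i => ?_
  constructor <;> rintro ⟨h₁, h₂⟩ <;> constructor <;> linarith

lemma card_intBox_le {ι : Type*} [Fintype ι] [DecidableEq ι] (y : ι → ℝ) {R : ℝ} (hR : 0 ≤ R) :
    (#(intBox y R) : ℝ) ≤ (2 * R + 1) ^ Fintype.card ι := by
  rw [intBox, Fintype.card_piFinset, Nat.cast_prod, ← Finset.card_univ, ← prod_const]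
  refine prod_le_prod (fun _ _ => Nat.cast_nonneg _) fun i _ => ?_
  rcases le_or_gt ⌈y i - R⌉ (⌊y i + R⌋ + 1) with hle | hlt
  · have hcard := Int.card_Icc_of_le _ _ hle
    have : ((#(Finset.Icc ⌈y i - R⌉ ⌊y i + R⌋) : ℤ) : ℝ) = (⌊y i + R⌋ : ℝ) + 1 - ⌈y i - R⌉ := by
      rw [hcard]; push_cast; ring
    rw [Int.cast_natCast] at this
    rw [this]
    linarith [Int.floor_le (y i + R), Int.le_ceil (y i - R)]
  · rw [Finset.Icc_eq_empty (by omega), Finset.card_empty, Nat.cast_zero]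
    positivity

lemma mem_intBox_of_norm_sub_node_le {d : ℕ} {h R : ℝ} (hh : 0 < h) {y : Fin d → ℝ}
    {k : Fin d → ℤ} (hk : ‖y - node d h k‖ ≤ h * R) : k ∈ intBox (fun i => y i / h) R := by
  refine mem_intBox.2 fun i => ?_
  have hi := (norm_le_pi_norm (y - node d h k) i).trans hk
  rw [Pi.sub_apply, Real.norm_eq_abs, node, show y i - h * k i = h * (y i / h - k i) by
    field_simp, abs_mul, abs_of_pos hh] at hi
  exact le_of_mul_le_mul_left hi hh

lemma mem_intBox_of_part_ne_zero {d : ℕ} {h ρ0 δ : ℝ} {φ : (Fin d → ℝ) → ℝ} (hh : 0 < h)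
    (hsupp : ∀ y, φ y ≠ 0 → ‖y‖ ≤ ρ0) (hδ : 0 ≤ δ) {k : Fin d → ℤ} {u v : Fin d → ℝ}
    (huv : ‖v - u‖ ≤ h * δ) (hk : part d h φ k u ≠ 0 ∨ part d h φ k v ≠ 0) :
    k ∈ intBox (fun i => v i / h) (ρ0 + δ) := by
  refine mem_intBox_of_norm_sub_node_le hh ?_
  rcases hk with hu | hv
  · calc ‖v - node d h k‖ ≤ ‖v - u‖ + ‖u - node d h k‖ :=
          norm_sub_le_norm_sub_add_norm_sub _ _ _
      _ ≤ h * δ + h * ρ0 := add_le_add huv (norm_sub_node_le_of_part_ne_zero hh hsupp hu)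
      _ = h * (ρ0 + δ) := by ring
  · exact (norm_sub_node_le_of_part_ne_zero hh hsupp hv).trans
      (mul_le_mul_of_nonneg_left (le_add_of_nonneg_right hδ) hh.le)

lemma abs_mul_part_sub_mul_part_le {d : ℕ} {h cw M δ : ℝ} {Lφ : ℝ≥0} {φ : (Fin d → ℝ) → ℝ}
    (hh : 0 < h) (hφ : LipschitzWith Lφ φ) {a : ℝ} (ha : |a| ≤ cw * h ^ d * M)
    (k : Fin d → ℤ) {u v : Fin d → ℝ} (huv : ‖u - v‖ ≤ h * δ) :
    |a * part d h φ k u - a * part d h φ k v| ≤ cw * M * Lφ * δ := by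
  rw [← mul_sub, abs_mul]
  calc |a| * |part d h φ k u - part d h φ k v|
      ≤ (cw * h ^ d * M) * (Lφ * (h * δ) / h ^ (d + 1)) := by
        gcongr
        · exact (abs_nonneg a).trans ha
        · exact (abs_part_sub_part_le hh hφ k u v).trans (by gcongr)
    _ = cw * M * Lφ * δ := by field_simp; ring

lemma abs_tsum_mul_sub_tsum_mul_le {ι : Type*} {w p q : ι → ℝ} (s : Finset ι) {B : ℝ}
    (hB : 0 ≤ B) (hs : ∀ k, p k ≠ 0 ∨ q k ≠ 0 → k ∈ s)
    (hpq : ∀ k, p k ≠ 0 ∨ q k ≠ 0 → |w k * p k - w k * q k| ≤ B) :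
    |∑' k, w k * p k - ∑' k, w k * q k| ≤ #s * B := by
  have hzero : ∀ k ∉ s, p k = 0 ∧ q k = 0 := fun k hk => by
    by_contra hne
    exact hk (hs k (not_and_or.1 hne))
  rw [tsum_eq_sum fun k hk => by rw [(hzero k hk).1, mul_zero],
    tsum_eq_sum fun k hk => by rw [(hzero k hk).2, mul_zero],
    ← sum_sub_distrib, ← nsmul_eq_mul, ← sum_const]
  refine (abs_sum_le_sum_abs _ _).trans (sum_le_sum fun k _ => ?_)
  by_cases hk : p k ≠ 0 ∨ q k ≠ 0
  · exact hpq k hk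
  · obtain ⟨hp, hq⟩ := not_or.1 hk
    simp [not_not.1 hp, not_not.1 hq, hB]

lemma sub_apply_node_eq_fderiv_B1_sub_node {d : ℕ} {h : ℝ} {F : (Fin d → ℝ) ≃ (Fin d → ℝ)}
    (hF : Differentiable ℝ F) (hFs : Differentiable ℝ F.symm) (k : Fin d → ℤ) (x : Fin d → ℝ) :
    x - F (node d h k) = fderiv ℝ F (node d h k) (B1 d h F k x - node d h k) := by
  have hinv := fderiv_apply_fderiv_symm_apply hF hFs (F (node d h k)) (x - F (node d h k))
  rw [F.symm_apply_apply] at hinv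
  rw [B1, add_sub_cancel_left, hinv]

lemma norm_sub_apply_node_le_of_part_ne_zero {d : ℕ} {h ρ0 cF1 : ℝ} {φ : (Fin d → ℝ) → ℝ}
    {F : (Fin d → ℝ) ≃ (Fin d → ℝ)} (hh : 0 < h) (hsupp : ∀ y, φ y ≠ 0 → ‖y‖ ≤ ρ0)
    (hF : Differentiable ℝ F) (hFs : Differentiable ℝ F.symm)
    (hDF : ∀ z, ‖fderiv ℝ F z‖ ≤ cF1) {k : Fin d → ℤ} {x : Fin d → ℝ}
    (hk : part d h φ k (B1 d h F k x) ≠ 0 ∨ part d h φ k (F.symm x) ≠ 0) :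
    ‖x - F (node d h k)‖ ≤ cF1 * (h * ρ0) := by
  have hcF1 : 0 ≤ cF1 := (norm_nonneg _).trans (hDF x)
  rcases hk with hk | hk
  · rw [sub_apply_node_eq_fderiv_B1_sub_node hF hFs]
    exact (fderiv ℝ F _).le_of_opNorm_le (hDF _) _ |>.trans
      (mul_le_mul_of_nonneg_left (norm_sub_node_le_of_part_ne_zero hh hsupp hk) hcF1)
  · conv_lhs => rw [← F.apply_symm_apply x]
    exact convex_univ.norm_image_sub_le_of_norm_fderiv_le (fun z _ => hF z) (fun z _ => hDF z)
      (mem_univ _) (mem_univ _) |>.trans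
      (mul_le_mul_of_nonneg_left (norm_sub_node_le_of_part_ne_zero hh hsupp hk) hcF1)

lemma norm_symm_sub_B1_le {d : ℕ} {h cB2 : ℝ} {F : (Fin d → ℝ) ≃ (Fin d → ℝ)} (hcB2 : 0 ≤ cB2)
    (hFs : ContDiff ℝ 2 F.symm)
    (hB : ∀ i x, ∑ l₁, ∑ l₂, |pd d l₁ (pd d l₂ (fun y => F.symm y i)) x| ≤ cB2)
    (k : Fin d → ℤ) (x : Fin d → ℝ) :
    ‖F.symm x - B1 d h F k x‖ ≤ cB2 * ‖x - F (node d h k)‖ ^ 2 := by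
  refine (pi_norm_le_iff_of_nonneg (by positivity)).2 fun i => ?_
  have hFsi : ContDiff ℝ 2 fun y => F.symm y i := (contDiff_apply ℝ ℝ i).comp hFs
  have htaylor := norm_sub_sub_fderiv_le_of_norm_fderiv_fderiv_le hFsi
    (fun z => (norm_fderiv_fderiv_le_sum_abs_pd_pd hFsi z).trans (hB i z)) (F (node d h k)) x
  rw [fderiv_apply ((hFs.differentiable two_ne_zero) _), F.symm_apply_apply] at htaylor
  have hcomp : (F.symm x - B1 d h F k x) i = F.symm x i - node d h k i
      - fderiv ℝ F.symm (F (node d h k)) (x - F (node d h k)) i := by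
    simp only [B1, Pi.sub_apply, Pi.add_apply]; ring
  rw [hcomp]
  exact htaylor

lemma norm_symm_sub_B1_le_of_part_ne_zero {d : ℕ} {h ρ0 cF1 cB2 : ℝ}
    {φ : (Fin d → ℝ) → ℝ} {F : (Fin d → ℝ) ≃ (Fin d → ℝ)} (hh : 0 < h)
    (hsupp : ∀ y, φ y ≠ 0 → ‖y‖ ≤ ρ0) (hF : Differentiable ℝ F) (hFs : ContDiff ℝ 2 F.symm)
    (hDF : ∀ z, ‖fderiv ℝ F z‖ ≤ cF1) (hcB2 : 0 ≤ cB2)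
    (hB : ∀ i x, ∑ l₁, ∑ l₂, |pd d l₁ (pd d l₂ (fun y => F.symm y i)) x| ≤ cB2)
    {k : Fin d → ℤ} {x : Fin d → ℝ}
    (hk : part d h φ k (B1 d h F k x) ≠ 0 ∨ part d h φ k (F.symm x) ≠ 0) :
    ‖F.symm x - B1 d h F k x‖ ≤ h * (ρ0 ^ 2 * (h * (cF1 ^ 2 * cB2))) :=
  calc ‖F.symm x - B1 d h F k x‖ ≤ cB2 * ‖x - F (node d h k)‖ ^ 2 :=
        norm_symm_sub_B1_le hcB2 hFs hB k x
    _ ≤ cB2 * (cF1 * (h * ρ0)) ^ 2 := by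
        gcongr
        exact norm_sub_apply_node_le_of_part_ne_zero hh hsupp hF
          (hFs.differentiable two_ne_zero) hDF hk
    _ = h * (ρ0 ^ 2 * (h * (cF1 ^ 2 * cB2))) := by ring

/-- the linearly-transformed particle (LTP) transport operator
`T̄_{h,(1)} φ⁰_{h,k} := φ⁰_{h,k} ∘ B̄_{(1),k}` satisfies
`‖(T̄_{h,(1)} − T̄_ex) f⁰_h‖_∞ ≤ C h c_F (1 + h c_F)^d ‖f⁰‖_∞` with `c_F := |F̄|₁² |B̄|₂`
and `C = C(c_w, L_φ, ρ⁰, d)`. -/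
theorem LTP_transport_error
    (d : ℕ) (hd : 1 ≤ d) (cw : ℝ) (hcw : 0 < cw) (Lφ : ℝ≥0)
    (ρ0 : ℝ) (hρ0 : 0 < ρ0) :
    ∃ C : ℝ, 0 < C ∧
      ∀ (h : ℝ), 0 < h →
      ∀ (φ : (Fin d → ℝ) → ℝ), LipschitzWith Lφ φ → (∀ x, φ x ≠ 0 → ‖x‖ ≤ ρ0) →
      ∀ (f0 : (Fin d → ℝ) → ℝ), BddAbove (Set.range fun x => |f0 x|) →
      ∀ (w : (Fin d → ℤ) → ℝ), (∀ k, |w k| ≤ cw * h ^ d * ⨆ y, |f0 y|) →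
      ∀ (F : (Fin d → ℝ) ≃ (Fin d → ℝ)),
        ContDiff ℝ 1 (F : (Fin d → ℝ) → (Fin d → ℝ)) →
        ContDiff ℝ 2 (F.symm : (Fin d → ℝ) → (Fin d → ℝ)) →
      -- `cF1` bounds the seminorm `|F̄|₁ = max_i Σ_l ‖∂_l F_i‖_∞`
      ∀ (cF1 : ℝ), (∀ (i : Fin d) (x : Fin d → ℝ),
          ∑ l : Fin d, |pd d l (fun y => F y i) x| ≤ cF1) →
      -- `cB2` bounds the seminorm `|B̄|₂ = max_i Σ_{l₁,l₂} ‖∂_{l₁}∂_{l₂} B̄_i‖_∞`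
      ∀ (cB2 : ℝ), (∀ (i : Fin d) (x : Fin d → ℝ),
          ∑ l1 : Fin d, ∑ l2 : Fin d,
            |pd d l1 (pd d l2 (fun y => F.symm y i)) x| ≤ cB2) →
      ∀ x : Fin d → ℝ,
        |(∑' k : Fin d → ℤ, w k * part d h φ k (B1 d h F k x))
            - ∑' k : Fin d → ℤ, w k * part d h φ k (F.symm x)|
          ≤ C * (h * (cF1 ^ 2 * cB2)) * (1 + h * (cF1 ^ 2 * cB2)) ^ d * ⨆ y, |f0 y| := by
  refine ⟨(1 + 2 * ρ0 + 2 * ρ0 ^ 2) ^ d * cw * (Lφ + 1) * ρ0 ^ 2, by positivity, ?_⟩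
  intro h hh φ hφ hsupp f0 _ w hw F hF hFs cF1 hF1 cB2 hB2 x
  set t := h * (cF1 ^ 2 * cB2)
  set M := ⨆ y, |f0 y|
  have hcF1 : 0 ≤ cF1 := (sum_nonneg fun _ _ => abs_nonneg _).trans (hF1 ⟨0, hd⟩ 0)
  have hcB2 : 0 ≤ cB2 :=
    (sum_nonneg fun _ _ => sum_nonneg fun _ _ => abs_nonneg _).trans (hB2 ⟨0, hd⟩ 0)
  have hM : 0 ≤ M := Real.iSup_nonneg fun _ => abs_nonneg _
  have ht : 0 ≤ t := by positivity
  have hclose : ∀ k, part d h φ k (B1 d h F k x) ≠ 0 ∨ part d h φ k (F.symm x) ≠ 0 →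
      ‖F.symm x - B1 d h F k x‖ ≤ h * (ρ0 ^ 2 * t) := fun k hk =>
    norm_symm_sub_B1_le_of_part_ne_zero hh hsupp (hF.differentiable one_ne_zero) hFs
      (norm_fderiv_le_of_sum_abs_pd_le hcF1 (hF.differentiable one_ne_zero) hF1) hcB2 hB2 hk
  calc _ ≤ #(intBox (fun i => F.symm x i / h) (ρ0 + ρ0 ^ 2 * t))
          * (cw * M * Lφ * (ρ0 ^ 2 * t)) :=
        abs_tsum_mul_sub_tsum_mul_le _ (by positivity)
          (fun k hk => mem_intBox_of_part_ne_zero hh hsupp (by positivity) (hclose k hk) hk)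
          (fun k hk => abs_mul_part_sub_mul_part_le hh hφ (hw k) k
            ((norm_sub_rev _ _).trans_le (hclose k hk)))
    _ ≤ (2 * (ρ0 + ρ0 ^ 2 * t) + 1) ^ d * (cw * M * Lφ * (ρ0 ^ 2 * t)) := by
        gcongr
        simpa using card_intBox_le (fun i => F.symm x i / h) (by positivity : 0 ≤ ρ0 + ρ0 ^ 2 * t)
    _ ≤ ((1 + 2 * ρ0 + 2 * ρ0 ^ 2) * (1 + t)) ^ d * (cw * M * (Lφ + 1) * (ρ0 ^ 2 * t)) := by
        gcongr
        · nlinarith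
        · linarith
    _ = _ := by rw [mul_pow]; ring
end

section
/- The enlarged a priori supports have uniformly bounded overlapping: with ẽ_{B,(1)}(h) := sup_{k∈ℤ^d} sup_{x∈Σ̃_{h,k}} ‖B̄_{(1),k}(x) − B̄(x)‖_∞, the overlapping constant Θ̃(h) := sup_{x∈ℝ^d} #{k ∈ ℤ^d : x ∈ Σ̃_{h,k}} satisfies Θ̃(h) ≤ C (1 + h^{−1} ẽ_{B,(1)}(h))^d for a constant C depending only on ρ⁰ and d. -/
open scoped NNReal
open Set

/-- Linearized forward flow `F̄_{(1),k}(x̂) := F̄(x⁰_k) + J_k (x̂ − x⁰_k)`. -/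
noncomputable def F1 (d : ℕ) (h : ℝ) (F : (Fin d → ℝ) ≃ (Fin d → ℝ))
    (k : Fin d → ℤ) (y : Fin d → ℝ) : Fin d → ℝ :=
  F (node d h k) +
    fderiv ℝ (F : (Fin d → ℝ) → (Fin d → ℝ)) (node d h k) (y - node d h k)

/-- Enlarged radius `ρ̃_{h,k} := ρ⁰ + h⁻¹ sup_{x ∈ F̄(Σ⁰_{h,k})} ‖B̄_{(1),k}(x) − B̄(x)‖_∞`. -/
noncomputable def ρt (d : ℕ) (h ρ0 : ℝ) (φ : (Fin d → ℝ) → ℝ)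
    (F : (Fin d → ℝ) ≃ (Fin d → ℝ)) (k : Fin d → ℤ) : ℝ :=
  ρ0 + h⁻¹ * ⨆ x : (F '' Function.support (part d h φ k)),
      ‖B1 d h F k x.1 - F.symm x.1‖

/-- Enlarged a priori support `Σ̃_{h,k} := F̄_{(1),k}(B_∞(x⁰_k, h ρ̃_{h,k}))`. -/
noncomputable def St (d : ℕ) (h ρ0 : ℝ) (φ : (Fin d → ℝ) → ℝ)
    (F : (Fin d → ℝ) ≃ (Fin d → ℝ)) (k : Fin d → ℤ) : Set (Fin d → ℝ) :=
  F1 d h F k '' Metric.closedBall (node d h k) (h * ρt d h ρ0 φ F k)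

/-
The linearized flows `F̄_{(1),k}` and `B̄_{(1),k}` are mutually inverse affine maps, so
`x ∈ Σ̃_{h,k}` exactly when `‖B̄_{(1),k}(x) − x⁰_k‖_∞ ≤ h ρ̃_{h,k}`. The supremum defining `ρ̃_{h,k}`
runs over `F̄(Σ⁰_{h,k})`, which lies in `Σ̃_{h,k}`; hence `h ρ̃_{h,k} ≤ h ρ⁰ + ẽ` and, by the
triangle inequality, `‖B̄(x) − h k‖_∞ ≤ h ρ⁰ + 2 ẽ`. The admissible `k` are therefore lattice
points of the cube of half-side `ρ⁰ + 2 h⁻¹ ẽ` about `h⁻¹ B̄(x)`, of which there are at most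
`(2 ρ⁰ + 4 h⁻¹ ẽ + 1)^d`.
-/

open Function
open scoped Finset

section Counting

variable {ι : Type*} [Fintype ι] [DecidableEq ι]

theorem Int.card_Icc_ceil_floor_le {a b : ℝ} (hab : a ≤ b) :
    (#(Finset.Icc ⌈a⌉ ⌊b⌋) : ℝ) ≤ b - a + 1 := by
  rcases le_or_gt ⌈a⌉ (⌊b⌋ + 1) with hle | hlt
  · have hcard : ((#(Finset.Icc ⌈a⌉ ⌊b⌋) : ℤ) : ℝ) = ⌊b⌋ + 1 - ⌈a⌉ := by
      exact_mod_cast Int.card_Icc_of_le _ _ hle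
    push_cast at hcard
    linarith [Int.floor_le b, Int.le_ceil a]
  · rw [Finset.Icc_eq_empty_of_lt (by omega), Finset.card_empty, Nat.cast_zero]
    linarith

theorem mem_Icc_ceil_floor_of_norm_sub_le {z : ι → ℝ} {k : ι → ℤ} {r : ℝ}
    (hk : ‖fun i => z i - k i‖ ≤ r) :
    k ∈ Finset.Icc (fun i => ⌈z i - r⌉) (fun i => ⌊z i + r⌋) := by
  have hki i : |z i - k i| ≤ r := (norm_le_pi_norm (fun i => z i - k i) i).trans hk
  refine Finset.mem_Icc.2 ⟨fun i => Int.ceil_le.2 ?_, fun i => Int.le_floor.2 ?_⟩ <;>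
    linarith [abs_le.1 (hki i)]

theorem card_Icc_ceil_floor_le_pow (z : ι → ℝ) {r : ℝ} (hr : 0 ≤ r) :
    (#(Finset.Icc (fun i => ⌈z i - r⌉) (fun i => ⌊z i + r⌋)) : ℝ) ≤
      (2 * r + 1) ^ Fintype.card ι := by
  rw [Pi.card_Icc, Nat.cast_prod, ← Finset.card_univ, ← Finset.prod_const]
  refine Finset.prod_le_prod (fun _ _ => Nat.cast_nonneg _) fun i _ => ?_
  calc (#(Finset.Icc ⌈z i - r⌉ ⌊z i + r⌋) : ℝ) ≤ z i + r - (z i - r) + 1 :=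
        Int.card_Icc_ceil_floor_le (by linarith)
    _ = 2 * r + 1 := by ring

end Counting

theorem Equiv.fderiv_symm_comp_fderiv {𝕜 E G : Type*} [NontriviallyNormedField 𝕜]
    [NormedAddCommGroup E] [NormedSpace 𝕜 E] [NormedAddCommGroup G] [NormedSpace 𝕜 G]
    (e : E ≃ G) {a : E} (he : DifferentiableAt 𝕜 e a) (hes : DifferentiableAt 𝕜 e.symm (e a)) :
    (fderiv 𝕜 e.symm (e a)).comp (fderiv 𝕜 e a) = ContinuousLinearMap.id 𝕜 E := by
  rw [← fderiv_comp a hes he, e.symm_comp_self, fderiv_id]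

section LinearizedFlows

variable {d : ℕ} {h ρ0 : ℝ} {φ : (Fin d → ℝ) → ℝ} {F : (Fin d → ℝ) ≃ (Fin d → ℝ)}
  {k : Fin d → ℤ}

theorem leftInverse_B1_F1 (hF : DifferentiableAt ℝ F (node d h k))
    (hFs : DifferentiableAt ℝ F.symm (F (node d h k))) :
    LeftInverse (B1 d h F k) (F1 d h F k) := fun y => by
  rw [B1, F1, add_sub_cancel_left, ← ContinuousLinearMap.comp_apply,
    F.fderiv_symm_comp_fderiv hF hFs, ContinuousLinearMap.id_apply, add_sub_cancel]

theorem rightInverse_B1_F1 (hF : DifferentiableAt ℝ F (node d h k))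
    (hFs : DifferentiableAt ℝ F.symm (F (node d h k))) :
    RightInverse (B1 d h F k) (F1 d h F k) := fun x => by
  have hcomp := F.symm.fderiv_symm_comp_fderiv hFs
    (by rwa [Equiv.symm_symm, Equiv.symm_apply_apply])
  rw [Equiv.symm_symm, Equiv.symm_apply_apply] at hcomp
  rw [B1, F1, add_sub_cancel_left, ← ContinuousLinearMap.comp_apply, hcomp,
    ContinuousLinearMap.id_apply, add_sub_cancel]

theorem mem_St_iff (hF : DifferentiableAt ℝ F (node d h k))
    (hFs : DifferentiableAt ℝ F.symm (F (node d h k))) {x : Fin d → ℝ} :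
    x ∈ St d h ρ0 φ F k ↔ ‖B1 d h F k x - node d h k‖ ≤ h * ρt d h ρ0 φ F k := by
  rw [St, image_eq_preimage_of_inverse (leftInverse_B1_F1 hF hFs) (rightInverse_B1_F1 hF hFs),
    mem_preimage, Metric.mem_closedBall, dist_eq_norm]

theorem norm_sub_node (hh : 0 < h) (w : Fin d → ℝ) :
    ‖w - node d h k‖ = h * ‖fun i => w i / h - k i‖ := by
  have hsmul : w - node d h k = h • fun i => w i / h - k i := by
    ext i
    simp only [Pi.sub_apply, Pi.smul_apply, node, smul_eq_mul]
    field_simp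
  rw [hsmul, norm_smul, Real.norm_of_nonneg hh.le]

theorem norm_sub_node_le_of_mem_support_part (hh : 0 < h) (hφ : ∀ x, φ x ≠ 0 → ‖x‖ ≤ ρ0)
    {w : Fin d → ℝ} (hw : w ∈ support (part d h φ k)) : ‖w - node d h k‖ ≤ h * ρ0 := by
  have hφw : φ (fun i => w i / h - k i) ≠ 0 := fun h0 => hw (by rw [part, h0, mul_zero])
  rw [norm_sub_node hh]
  exact mul_le_mul_of_nonneg_left (hφ _ hφw) hh.le

theorem mul_ρt (hh : h ≠ 0) :
    h * ρt d h ρ0 φ F k =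
      h * ρ0 + ⨆ x : (F '' support (part d h φ k)), ‖B1 d h F k x.1 - F.symm x.1‖ := by
  rw [ρt, mul_add, ← mul_assoc, mul_inv_cancel₀ hh, one_mul]

theorem image_support_part_subset_St (hh : 0 < h) (hφ : ∀ x, φ x ≠ 0 → ‖x‖ ≤ ρ0)
    (hF : DifferentiableAt ℝ F (node d h k)) (hFs : DifferentiableAt ℝ F.symm (F (node d h k)))
    (hbdd : BddAbove (range fun x : (F '' support (part d h φ k)) =>
      ‖B1 d h F k x.1 - F.symm x.1‖)) :
    F '' support (part d h φ k) ⊆ St d h ρ0 φ F k := by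
  rintro _ ⟨w, hw, rfl⟩
  have herr : ‖B1 d h F k (F w) - w‖ ≤
      ⨆ x : (F '' support (part d h φ k)), ‖B1 d h F k x.1 - F.symm x.1‖ := by
    simpa using le_ciSup hbdd ⟨F w, w, hw, rfl⟩
  rw [mem_St_iff hF hFs, mul_ρt hh.ne', ← sub_add_sub_cancel _ w]
  linarith [norm_add_le (B1 d h F k (F w) - w) (w - node d h k),
    norm_sub_node_le_of_mem_support_part hh hφ hw]

theorem mul_ρt_le (hh : 0 < h) (hφ : ∀ x, φ x ≠ 0 → ‖x‖ ≤ ρ0)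
    (hF : DifferentiableAt ℝ F (node d h k)) (hFs : DifferentiableAt ℝ F.symm (F (node d h k)))
    (hbdd : BddAbove (range fun x : (F '' support (part d h φ k)) =>
      ‖B1 d h F k x.1 - F.symm x.1‖))
    {etB : ℝ} (hetB0 : 0 ≤ etB) (hetB : ∀ x ∈ St d h ρ0 φ F k, ‖B1 d h F k x - F.symm x‖ ≤ etB) :
    h * ρt d h ρ0 φ F k ≤ h * ρ0 + etB := by
  rw [mul_ρt hh.ne', add_le_add_iff_left]
  exact Real.iSup_le (fun y => hetB y.1 (image_support_part_subset_St hh hφ hF hFs hbdd y.2)) hetB0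

theorem norm_symm_sub_node_le_of_mem_St (hF : DifferentiableAt ℝ F (node d h k))
    (hFs : DifferentiableAt ℝ F.symm (F (node d h k))) {x : Fin d → ℝ}
    (hx : x ∈ St d h ρ0 φ F k) :
    ‖F.symm x - node d h k‖ ≤ ‖B1 d h F k x - F.symm x‖ + h * ρt d h ρ0 φ F k :=
  calc ‖F.symm x - node d h k‖
      = ‖(F.symm x - B1 d h F k x) + (B1 d h F k x - node d h k)‖ := by rw [sub_add_sub_cancel]
    _ ≤ ‖F.symm x - B1 d h F k x‖ + ‖B1 d h F k x - node d h k‖ := norm_add_le _ _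
    _ ≤ ‖B1 d h F k x - F.symm x‖ + h * ρt d h ρ0 φ F k := by
      rw [norm_sub_rev]
      gcongr
      exact (mem_St_iff hF hFs).1 hx

end LinearizedFlows

theorem enlarged_supports_bounded_overlapping_general
    (d : ℕ) (ρ0 : ℝ) :
    ∃ C : ℝ, 0 < C ∧
      ∀ (h : ℝ), 0 < h →
      ∀ (φ : (Fin d → ℝ) → ℝ) (Lφ : ℝ≥0), LipschitzWith Lφ φ →
        (∀ x, φ x ≠ 0 → ‖x‖ ≤ ρ0) →
      ∀ (F : (Fin d → ℝ) ≃ (Fin d → ℝ)),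
        ContDiff ℝ 1 (F : (Fin d → ℝ) → (Fin d → ℝ)) →
        ContDiff ℝ 1 (F.symm : (Fin d → ℝ) → (Fin d → ℝ)) →
        (∀ k : Fin d → ℤ,
          BddAbove (Set.range fun x : (F '' Function.support (part d h φ k)) =>
            ‖B1 d h F k x.1 - F.symm x.1‖)) →
      ∀ (etB : ℝ), 0 ≤ etB →
        (∀ k : Fin d → ℤ, ∀ x ∈ St d h ρ0 φ F k,
          ‖B1 d h F k x - F.symm x‖ ≤ etB) →
      ∀ x : Fin d → ℝ,
        {k : Fin d → ℤ | x ∈ St d h ρ0 φ F k}.Finite ∧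
        (({k : Fin d → ℤ | x ∈ St d h ρ0 φ F k}).ncard : ℝ)
          ≤ C * (1 + h⁻¹ * etB) ^ d := by
  refine ⟨(2 * |ρ0| + 4) ^ d, by positivity, ?_⟩
  intro h hh φ Lφ _ hφ F hF hFs hbdd etB hetB0 hetB x
  set t := h⁻¹ * etB
  have ht : 0 ≤ t := by positivity
  set R := |ρ0| + 2 * t
  have hsub : {k : Fin d → ℤ | x ∈ St d h ρ0 φ F k} ⊆
      Finset.Icc (fun i => ⌈F.symm x i / h - R⌉) (fun i => ⌊F.symm x i / h + R⌋) := fun k hk => by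
    have hF' := hF.differentiable one_ne_zero (node d h k)
    have hFs' := hFs.differentiable one_ne_zero (F (node d h k))
    have hnode : ‖F.symm x - node d h k‖ ≤ h * ρ0 + 2 * etB := by
      linarith [norm_symm_sub_node_le_of_mem_St hF' hFs' hk, hetB k x hk,
        mul_ρt_le hh hφ hF' hFs' (hbdd k) hetB0 (hetB k)]
    rw [norm_sub_node hh, ← le_div_iff₀' hh, add_div, mul_div_cancel_left₀ _ hh.ne'] at hnode
    refine mem_Icc_ceil_floor_of_norm_sub_le (hnode.trans ?_)
    have : 2 * etB / h = 2 * t := by simp only [t]; ring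
    linarith [le_abs_self ρ0]
  refine ⟨(Finset.finite_toSet _).subset hsub, ?_⟩
  calc (({k : Fin d → ℤ | x ∈ St d h ρ0 φ F k}).ncard : ℝ)
      ≤ #(Finset.Icc (fun i => ⌈F.symm x i / h - R⌉) (fun i => ⌊F.symm x i / h + R⌋)) := by
        exact_mod_cast (ncard_le_ncard hsub (Finset.finite_toSet _)).trans (ncard_coe_finset _).le
    _ ≤ (2 * R + 1) ^ d := by
        simpa using card_Icc_ceil_floor_le_pow (fun i => F.symm x i / h) (by positivity)
    _ ≤ (2 * |ρ0| + 4) ^ d * (1 + t) ^ d := by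
        rw [← mul_pow]
        gcongr
        nlinarith [mul_nonneg (abs_nonneg ρ0) ht]

/-- the enlarged a priori supports have uniformly bounded overlapping:
with `ẽ_{B,(1)}(h)` the error of the linearized backward flows on `Σ̃_{h,k}`, the
overlapping constant satisfies `Θ̃(h) ≤ C (1 + h⁻¹ ẽ_{B,(1)}(h))^d`, `C = C(ρ⁰, d)`. -/
theorem enlarged_supports_bounded_overlapping
    (d : ℕ) (hd : 1 ≤ d) (ρ0 : ℝ) (hρ0 : 0 < ρ0) :
    ∃ C : ℝ, 0 < C ∧
      ∀ (h : ℝ), 0 < h →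
      ∀ (φ : (Fin d → ℝ) → ℝ) (Lφ : ℝ≥0), LipschitzWith Lφ φ →
        (∀ x, φ x ≠ 0 → ‖x‖ ≤ ρ0) →
      ∀ (F : (Fin d → ℝ) ≃ (Fin d → ℝ)),
        ContDiff ℝ 1 (F : (Fin d → ℝ) → (Fin d → ℝ)) →
        ContDiff ℝ 1 (F.symm : (Fin d → ℝ) → (Fin d → ℝ)) →
        (∀ k : Fin d → ℤ,
          BddAbove (Set.range fun x : (F '' Function.support (part d h φ k)) =>
            ‖B1 d h F k x.1 - F.symm x.1‖)) →
      ∀ (etB : ℝ), 0 ≤ etB →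
        (∀ k : Fin d → ℤ, ∀ x ∈ St d h ρ0 φ F k,
          ‖B1 d h F k x - F.symm x‖ ≤ etB) →
      ∀ x : Fin d → ℝ,
        {k : Fin d → ℤ | x ∈ St d h ρ0 φ F k}.Finite ∧
        (({k : Fin d → ℤ | x ∈ St d h ρ0 φ F k}).ncard : ℝ)
          ≤ C * (1 + h⁻¹ * etB) ^ d :=
  enlarged_supports_bounded_overlapping_general d ρ0
end
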